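/- arXiv:2010.05746 — 4 statements merged into one kernel-verified Lean document; each statement's English description precedes it below -/
import Mathlib

section
/- The collection of exponentials {e^{−2πiλω} : λ ∈ Ω}, with Ω = {0, r/N} + 2ℤ, forms an orthonormal basis of L²(Δ) where Δ = [0, 1/2) ∪ [N/2, (N+1)/2); that is, (Ω, Δ) is a spectral pair. -/
open MeasureTheory Complex Real ComplexConjugate

noncomputable section

/-- The nonuniform translation set Ω = {0, r/N} + 2ℤ. -/
def Omega (N : ℕ) (r : ℤ) : Set ℝ :=
  {x | ∃ n : ℤ, x = 2 * (n : ℝ) ∨ x = (r : ℝ) / (N : ℝ) + 2 * (n : ℝ)}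

/-- The spectral set Δ = [0, 1/2) ∪ [N/2, (N+1)/2). -/
def Delta (N : ℕ) : Set ℝ :=
  Set.Ico (0 : ℝ) (1 / 2) ∪ Set.Ico ((N : ℝ) / 2) (((N : ℝ) + 1) / 2)

/-!
Δ is the interval I = (0, 1/2] (up to null sets) together with its translate by N/2, so an
integral over Δ folds to an integral over I of h(x) + h(x + N/2). Under this translation the
exponential e_λ(x) = e^{-2πiλx} is multiplied by e_λ(N/2), which is 1 for λ ∈ 2ℤ and -1 for
λ ∈ r/N + 2ℤ, because r is odd.

Orthonormality: ∫_Δ e_λ conj(e_σ) = (1 + e_d(N/2)) ∫_I e_d with d = λ - σ, and d lies either in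
2ℤ, where ∫_I e_d = 1/2 or 0, or in (odd)/N, where the factor 1 + e_d(N/2) vanishes.

Completeness: the inner products of f with e_{2n} and e_{r/N+2n} are the Fourier coefficients,
for the period 1/2 of I, of f(x) + f(x + N/2) and of e^{2πirx/N} (f(x) - f(x + N/2)). By
Parseval both functions vanish a.e. on I, hence f vanishes a.e. on both halves of Δ.
-/

open Set

theorem ae_eq_zero_of_fourierCoeffOn_eq_zero {a b : ℝ} (hab : a < b) {f : ℝ → ℂ}
    (hf : MemLp f 2 (volume.restrict (Ioc a b))) (hcoeff : ∀ n, fourierCoeffOn hab f n = 0) :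
    f =ᵐ[volume.restrict (Ioc a b)] 0 := by
  have parseval := hasSum_sq_fourierCoeffOn hab hf
  simp only [hcoeff, norm_zero, ne_eq, OfNat.ofNat_ne_zero, not_false_eq_true, zero_pow]
    at parseval
  have hnorm : ∫ x in Ioc a b, ‖f x‖ ^ 2 = 0 := by
    rw [← intervalIntegral.integral_of_le hab.le]
    simpa [(sub_pos.2 hab).ne'] using parseval.unique hasSum_zero
  rw [integral_eq_zero_iff_of_nonneg (fun _ ↦ by positivity)
    (hf.integrable_norm_pow two_ne_zero)] at hnorm
  filter_upwards [hnorm] with x hx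
  simpa using hx

def expFreq (μ x : ℝ) : ℂ := Complex.exp (-2 * π * I * μ * x)

theorem expFreq_add_left (μ ν x : ℝ) : expFreq (μ + ν) x = expFreq μ x * expFreq ν x := by
  rw [expFreq, expFreq, expFreq, ← Complex.exp_add]; push_cast; ring_nf

theorem expFreq_add_right (μ x y : ℝ) : expFreq μ (x + y) = expFreq μ x * expFreq μ y := by
  rw [expFreq, expFreq, expFreq, ← Complex.exp_add]; push_cast; ring_nf

theorem conj_expFreq (μ x : ℝ) : conj (expFreq μ x) = expFreq (-μ) x := by
  rw [expFreq, expFreq, ← Complex.exp_conj]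
  simp only [map_mul, map_neg, map_ofNat, Complex.conj_ofReal, Complex.conj_I]
  push_cast; ring_nf

theorem expFreq_mul_conj_expFreq (μ ν x : ℝ) :
    expFreq μ x * conj (expFreq ν x) = expFreq (μ - ν) x := by
  rw [conj_expFreq, sub_eq_add_neg, expFreq_add_left]

theorem norm_expFreq (μ x : ℝ) : ‖expFreq μ x‖ = 1 := by
  rw [expFreq, show -2 * π * I * μ * x = ((-2 * π * μ * x : ℝ) : ℂ) * I by push_cast; ring]
  exact Complex.norm_exp_ofReal_mul_I _

theorem continuous_expFreq (μ : ℝ) : Continuous (expFreq μ) := by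
  unfold expFreq; fun_prop

theorem expFreq_ne_zero (μ x : ℝ) : expFreq μ x ≠ 0 := Complex.exp_ne_zero _

theorem expFreq_eq_one_of_mul_eq_intCast {μ x : ℝ} {k : ℤ} (h : μ * x = k) :
    expFreq μ x = 1 := by
  have hc : (μ : ℂ) * x = k := by exact_mod_cast h
  rw [expFreq, show -2 * π * I * μ * x = (-k : ℤ) * (2 * π * I) by
    push_cast; linear_combination (-2 * π * I) * hc]
  exact Complex.exp_int_mul_two_pi_mul_I _

theorem expFreq_eq_neg_one_of_mul_eq_odd_div_two {μ x : ℝ} {k : ℤ} (hk : Odd k)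
    (h : μ * x = k / 2) : expFreq μ x = -1 := by
  have hc : (μ : ℂ) * x = k / 2 := by exact_mod_cast h
  obtain ⟨m, rfl⟩ := hk
  rw [expFreq, show -2 * π * I * μ * x = (-(m + 1) : ℤ) * (2 * π * I) + π * I by
    push_cast at hc ⊢; linear_combination (-2 * π * I) * hc,
    Complex.exp_add, Complex.exp_int_mul_two_pi_mul_I, Complex.exp_pi_mul_I, one_mul]

theorem fourierCoeffOn_eq_setIntegral_mul_conj_expFreq {a b : ℝ} (hab : a < b) (f : ℝ → ℂ)
    (n : ℤ) :
    fourierCoeffOn hab f n =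
      (b - a)⁻¹ • ∫ x in Ioc a b, f x * conj (expFreq (-n / (b - a)) x) := by
  rw [fourierCoeffOn_eq_integral, intervalIntegral.integral_of_le hab.le, one_div]
  congr 1
  refine integral_congr_ae (ae_of_all _ fun x ↦ ?_)
  dsimp only
  rw [fourier_coe_apply, smul_eq_mul, mul_comm, conj_expFreq, expFreq]
  congr 2
  push_cast
  ring

theorem ae_eq_zero_of_forall_setIntegral_mul_conj_expFreq_eq_zero {a b : ℝ} (hab : a < b)
    {f : ℝ → ℂ} (hf : MemLp f 2 (volume.restrict (Ioc a b)))
    (horth : ∀ n : ℤ, ∫ x in Ioc a b, f x * conj (expFreq (n / (b - a)) x) = 0) :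
    f =ᵐ[volume.restrict (Ioc a b)] 0 := by
  refine ae_eq_zero_of_fourierCoeffOn_eq_zero hab hf fun n ↦ ?_
  rw [fourierCoeffOn_eq_setIntegral_mul_conj_expFreq, ← Int.cast_neg, horth, smul_zero]

theorem setIntegral_expFreq_intCast_div {a b : ℝ} (hab : a < b) (k : ℤ) :
    ∫ x in Ioc a b, expFreq (k / (b - a)) x = if k = 0 then ((b - a : ℝ) : ℂ) else 0 := by
  split_ifs with hk
  · simp [hk, expFreq, hab.le]
  have hba : b - a ≠ 0 := (sub_pos.2 hab).ne'
  set μ : ℝ := k / (b - a)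
  have hc : -2 * π * I * (μ : ℂ) ≠ 0 := by
    have : (b : ℂ) - a ≠ 0 := by exact_mod_cast hba
    simp [μ, hk, this, Real.pi_ne_zero, I_ne_zero]
  have hperiodic : expFreq μ b = expFreq μ a := by
    rw [← add_sub_cancel a b, expFreq_add_right,
      expFreq_eq_one_of_mul_eq_intCast (div_mul_cancel₀ _ hba), mul_one]
  rw [← intervalIntegral.integral_of_le hab.le]
  simp only [expFreq] at hperiodic ⊢
  rw [integral_exp_mul_complex hc, hperiodic, sub_self, zero_div]

section Delta

variable {N : ℕ}

theorem volume_restrict_Delta (hN : 1 ≤ N) :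
    volume.restrict (Delta N) = volume.restrict (Ioc 0 (1 / 2)) +
      (volume.restrict (Ioc 0 (1 / 2))).map (· + (N : ℝ) / 2) := by
  have hN' : (1 : ℝ) ≤ N := by exact_mod_cast hN
  have hdisj : Disjoint (Ico (0 : ℝ) (1 / 2)) (Ico ((N : ℝ) / 2) (((N : ℝ) + 1) / 2)) :=
    disjoint_left.2 fun x hx₀ hx₁ ↦ by linarith [hx₀.2, hx₁.1]
  have hshift : (volume.restrict (Ioc (0 : ℝ) (1 / 2))).map (· + (N : ℝ) / 2) =
      volume.restrict (Ioc ((N : ℝ) / 2) (((N : ℝ) + 1) / 2)) := by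
    conv_rhs => rw [← map_add_right_eq_self volume ((N : ℝ) / 2)]
    rw [Measure.restrict_map (measurable_add_const _) measurableSet_Ioc, preimage_add_const_Ioc]
    congr 3 <;> ring
  rw [hshift, Delta, Measure.restrict_union hdisj measurableSet_Ico,
    Measure.restrict_congr_set Ico_ae_eq_Ioc, Measure.restrict_congr_set Ico_ae_eq_Ioc]

theorem ae_restrict_Delta_iff (hN : 1 ≤ N) {p : ℝ → Prop} :
    (∀ᵐ x ∂volume.restrict (Delta N), p x) ↔
      (∀ᵐ x ∂volume.restrict (Ioc 0 (1 / 2)), p x) ∧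
        ∀ᵐ x ∂volume.restrict (Ioc 0 (1 / 2)), p (x + N / 2) := by
  rw [volume_restrict_Delta hN, ae_add_measure_iff, (measurableEmbedding_addRight _).ae_map_iff]

theorem MeasureTheory.MemLp.of_restrict_Delta {E : Type*} [NormedAddCommGroup E] (hN : 1 ≤ N)
    {p : ENNReal} {f : ℝ → E} (hf : MemLp f p (volume.restrict (Delta N))) :
    MemLp f p (volume.restrict (Ioc 0 (1 / 2))) ∧
      MemLp (fun x ↦ f (x + N / 2)) p (volume.restrict (Ioc 0 (1 / 2))) := by
  rw [volume_restrict_Delta hN] at hf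
  exact ⟨hf.left_of_add_measure,
    (measurableEmbedding_addRight _).memLp_map_measure_iff.1 hf.right_of_add_measure⟩

theorem setIntegral_Delta {E : Type*} [NormedAddCommGroup E] [NormedSpace ℝ E] (hN : 1 ≤ N)
    {h : ℝ → E} (h₀ : IntegrableOn h (Ioc 0 (1 / 2)))
    (h₁ : IntegrableOn (fun x ↦ h (x + N / 2)) (Ioc 0 (1 / 2))) :
    ∫ ω in Delta N, h ω = ∫ x in Ioc 0 (1 / 2), (h x + h (x + N / 2)) := by
  have hmap : Integrable h ((volume.restrict (Ioc 0 (1 / 2))).map (· + (N : ℝ) / 2)) :=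
    (measurableEmbedding_addRight _).integrable_map_iff.2 h₁
  rw [volume_restrict_Delta hN, integral_add_measure h₀ hmap,
    (measurableEmbedding_addRight _).integral_map, integral_add h₀ h₁]

theorem setIntegral_Delta_mul_conj_expFreq (hN : 1 ≤ N) {f : ℝ → ℂ}
    (h₀ : IntegrableOn f (Ioc 0 (1 / 2)))
    (h₁ : IntegrableOn (fun x ↦ f (x + N / 2)) (Ioc 0 (1 / 2))) (μ : ℝ) :
    ∫ ω in Delta N, f ω * conj (expFreq μ ω) =
      ∫ x in Ioc 0 (1 / 2), (f x + conj (expFreq μ (N / 2)) * f (x + N / 2)) *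
        conj (expFreq μ x) := by
  have hbound : ∀ x, ‖conj (expFreq μ x)‖ ≤ 1 := fun x ↦ by rw [RCLike.norm_conj, norm_expFreq]
  have hcont : Continuous fun x ↦ conj (expFreq μ x) :=
    continuous_conj.comp (continuous_expFreq μ)
  rw [setIntegral_Delta hN (h₀.mul_bdd hcont.aestronglyMeasurable (ae_of_all _ hbound))
    (h₁.mul_bdd (hcont.comp (continuous_add_const _)).aestronglyMeasurable
      (ae_of_all _ fun x ↦ hbound (x + N / 2)))]
  congr 1 with x
  rw [expFreq_add_right, map_mul]
  ring

theorem setIntegral_Delta_expFreq_mul_conj (hN : 1 ≤ N) (lam sig : ℝ) :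
    ∫ ω in Delta N, expFreq lam ω * conj (expFreq sig ω) =
      (1 + expFreq (lam - sig) (N / 2)) * ∫ x in Ioc 0 (1 / 2), expFreq (lam - sig) x := by
  simp_rw [expFreq_mul_conj_expFreq]
  have hint : ∀ c : ℝ, IntegrableOn (fun x ↦ expFreq (lam - sig) (x + c)) (Ioc 0 (1 / 2)) :=
    fun c ↦ ((continuous_expFreq _).comp (continuous_add_const c)).integrableOn_Ioc
  rw [setIntegral_Delta hN (by simpa using hint 0) (hint _), ← integral_const_mul]
  congr 1 with x
  rw [expFreq_add_right]
  ring

end Delta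

section Omega

variable {N : ℕ} {r : ℤ}

theorem exists_sub_eq_of_mem_Omega (hN : N ≠ 0) (hodd : Odd r) {lam sig : ℝ}
    (hlam : lam ∈ Omega N r) (hsig : sig ∈ Omega N r) :
    (∃ k : ℤ, lam - sig = 2 * k) ∨ ∃ j : ℤ, Odd j ∧ lam - sig = j / N := by
  have hN' : (N : ℝ) ≠ 0 := by exact_mod_cast hN
  have hodd_add (s : ℤ) (hs : Odd s) (m : ℤ) : Odd (s + 2 * m * N) :=
    hs.add_even ((even_two_mul m).mul_right _)
  obtain ⟨n, rfl | rfl⟩ := hlam <;> obtain ⟨m, rfl | rfl⟩ := hsig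
  · exact .inl ⟨n - m, by push_cast; ring⟩
  · exact .inr ⟨-r + 2 * (n - m) * N, hodd_add _ hodd.neg _, by field_simp; push_cast; ring⟩
  · exact .inr ⟨r + 2 * (n - m) * N, hodd_add _ hodd _, by field_simp; push_cast; ring⟩
  · exact .inl ⟨n - m, by push_cast; ring⟩

theorem setIntegral_Delta_expFreq_mul_conj_of_mem_Omega (hN : 1 ≤ N) (hodd : Odd r)
    {lam sig : ℝ} (hlam : lam ∈ Omega N r) (hsig : sig ∈ Omega N r) :
    ∫ ω in Delta N, expFreq lam ω * conj (expFreq sig ω) = if lam = sig then 1 else 0 := by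
  have hN' : (N : ℝ) ≠ 0 := by positivity
  rw [setIntegral_Delta_expFreq_mul_conj hN]
  rcases exists_sub_eq_of_mem_Omega (by omega) hodd hlam hsig with ⟨k, hk⟩ | ⟨j, hj, hj'⟩
  · have hshift : expFreq (lam - sig) (N / 2) = 1 :=
      expFreq_eq_one_of_mul_eq_intCast (k := k * N) (by rw [hk]; push_cast; ring)
    have hperiod := setIntegral_expFreq_intCast_div (a := 0) (b := 1 / 2) (by norm_num) k
    rw [show (k : ℝ) / (1 / 2 - 0) = lam - sig by rw [hk]; ring] at hperiod
    rw [hshift, hperiod]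
    have : lam = sig ↔ k = 0 := by rw [← sub_eq_zero, hk]; simp
    simp only [this]
    split_ifs <;> norm_num
  · have hshift : expFreq (lam - sig) (N / 2) = -1 :=
      expFreq_eq_neg_one_of_mul_eq_odd_div_two hj (by rw [hj']; field_simp)
    have hne : lam ≠ sig := by
      rw [← sub_ne_zero, hj']
      have hj0 : j ≠ 0 := by rintro rfl; simp at hj
      exact div_ne_zero (by exact_mod_cast hj0) hN'
    simp [hshift, hne]

theorem ae_eq_zero_of_forall_setIntegral_Delta_mul_conj_expFreq_eq_zero (hN : 1 ≤ N)
    (hodd : Odd r) {f : ℝ → ℂ} (hf : MemLp f 2 (volume.restrict (Delta N)))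
    (horth : ∀ lam ∈ Omega N r, ∫ ω in Delta N, f ω * conj (expFreq lam ω) = 0) :
    f =ᵐ[volume.restrict (Delta N)] 0 := by
  have hN' : (N : ℝ) ≠ 0 := by positivity
  obtain ⟨hf₀, hf₁⟩ := hf.of_restrict_Delta hN
  have hfold := setIntegral_Delta_mul_conj_expFreq hN (hf₀.integrable one_le_two)
    (hf₁.integrable one_le_two)
  have hsum : (fun x ↦ f x + f (x + N / 2)) =ᵐ[volume.restrict (Ioc 0 (1 / 2))] 0 := by
    refine ae_eq_zero_of_forall_setIntegral_mul_conj_expFreq_eq_zero (by norm_num)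
      (hf₀.add hf₁) fun n ↦ ?_
    have hshift : expFreq (2 * n) (N / 2) = 1 :=
      expFreq_eq_one_of_mul_eq_intCast (k := n * N) (by push_cast; ring)
    rw [show (n : ℝ) / (1 / 2 - 0) = 2 * n by ring, ← horth _ ⟨n, .inl rfl⟩, hfold, hshift,
      map_one]
    simp only [one_mul]
  have hdiff : (fun x ↦ conj (expFreq (r / N) x) * (f x - f (x + N / 2)))
      =ᵐ[volume.restrict (Ioc 0 (1 / 2))] 0 := by
    have hbounded :
        MemLp (fun x ↦ conj (expFreq (r / N) x)) ⊤ (volume.restrict (Ioc 0 (1 / 2))) :=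
      memLp_top_of_bound (continuous_conj.comp (continuous_expFreq _)).aestronglyMeasurable 1
        (ae_of_all _ fun x ↦ by rw [RCLike.norm_conj, norm_expFreq])
    refine ae_eq_zero_of_forall_setIntegral_mul_conj_expFreq_eq_zero (by norm_num)
      ((hf₀.sub hf₁).mul' hbounded) fun n ↦ ?_
    have hshift : expFreq (r / N + 2 * n) (N / 2) = -1 :=
      expFreq_eq_neg_one_of_mul_eq_odd_div_two (k := r + 2 * n * N)
        (hodd.add_even ((even_two_mul n).mul_right _)) (by field_simp; push_cast; ring)
    rw [show (n : ℝ) / (1 / 2 - 0) = 2 * n by ring, ← horth _ ⟨n, .inr rfl⟩, hfold, hshift]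
    congr 1 with x
    rw [expFreq_add_left, map_mul, map_neg, map_one]
    ring
  rw [Filter.EventuallyEq, ae_restrict_Delta_iff hN]
  have hdiff' : (fun x ↦ f x - f (x + N / 2)) =ᵐ[volume.restrict (Ioc 0 (1 / 2))] 0 := by
    filter_upwards [hdiff] with x hx
    exact (mul_eq_zero.1 hx).resolve_left ((map_ne_zero _).2 (expFreq_ne_zero _ _))
  constructor <;> filter_upwards [hsum, hdiff'] with x hs hd <;>
    simp only [Pi.zero_apply] at hs hd ⊢
  · linear_combination (hs + hd) / 2
  · linear_combination (hs - hd) / 2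

end Omega

theorem omega_delta_spectral_pair_general (N : ℕ) (r : ℤ) (hN : 1 ≤ N) (hodd : Odd r) :
    (∀ lam ∈ Omega N r, ∀ sig ∈ Omega N r,
        ∫ ω in Delta N,
          Complex.exp (-2 * π * I * lam * ω) * conj (Complex.exp (-2 * π * I * sig * ω))
          = if lam = sig then 1 else 0) ∧
    (∀ f : ℝ → ℂ, MemLp f 2 (volume.restrict (Delta N)) →
        (∀ lam ∈ Omega N r,
          ∫ ω in Delta N, f ω * conj (Complex.exp (-2 * π * I * lam * ω)) = 0) →
        f =ᵐ[volume.restrict (Delta N)] 0) :=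
  ⟨fun _ hlam _ hsig ↦ setIntegral_Delta_expFreq_mul_conj_of_mem_Omega hN hodd hlam hsig,
    fun _ hf horth ↦
      ae_eq_zero_of_forall_setIntegral_Delta_mul_conj_expFreq_eq_zero hN hodd hf horth⟩

/-- (Ω, Δ) is a spectral pair: the exponentials e^{-2πiλω}, λ ∈ Ω, form an
orthonormal basis of L²(Δ): they are orthonormal, and any f ∈ L²(Δ) orthogonal
to all of them vanishes a.e. on Δ. -/
theorem omega_delta_spectral_pair (N : ℕ) (r : ℤ) (hN : 1 ≤ N) (hodd : Odd r)
    (hr1 : 1 ≤ r) (hr2 : r ≤ 2 * (N : ℤ) - 1) (hcop : Int.gcd r (N : ℤ) = 1) :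
    (∀ lam ∈ Omega N r, ∀ sig ∈ Omega N r,
        ∫ ω in Delta N,
          Complex.exp (-2 * π * I * lam * ω) * conj (Complex.exp (-2 * π * I * sig * ω))
          = if lam = sig then 1 else 0) ∧
    (∀ f : ℝ → ℂ, MemLp f 2 (volume.restrict (Delta N)) →
        (∀ lam ∈ Omega N r,
          ∫ ω in Delta N, f ω * conj (Complex.exp (-2 * π * I * lam * ω)) = 0) →
        f =ᵐ[volume.restrict (Delta N)] 0) :=
  omega_delta_spectral_pair_general N r hN hodd

end
end

section
/- Suppose m₀ is as in the refinement equation, m₀(0) = 1, m₀ is continuous at 0, and the associated function 𝕄₀(ξ) = |m₀¹(ξ)|² + |m₀²(ξ)|² satisfies the two filter identities Σ_{p=0}^{2N−1} 𝕄₀(ξ + p/(4N)) = 1 and Σ_{p=0}^{2N−1} e^{−iπrp/N} 𝕄₀(ξ + p/(4N)) = 0 for a.e. ξ. If the infinite product ϕ̂(ξ) = ∏_{j=1}^∞ m₀(ξ/(2N)^j) converges almost everywhere on ℝ, then the resulting function ϕ̂ belongs to L²(ℝ) with ‖ϕ̂‖² ≤ 1. -/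
/-!
Write `a = 2N`, `Q = |m₀|²` and `M = 𝕄₀`. Since `m₀¹, m₀²` are `1/2`-periodic,
`Q(ξ + p/2) = M(ξ) + 2 Re(e^{-iπrp/N} w(ξ))` with `w` independent of `p`, so the two filter
identities taken at `ξ/a` give the refinement identity `∑_{p<2N} M((ξ + p/2)/a) Q(ξ + p/2) = M(ξ)`.

Substituting `ξ = a^J η` turns `R_J` into `a^J I_{J-1}`, where
`I_n = ∫_{-1/4}^{1/4} M(η) ∏_{j=1}^{n} Q(a^j η) dη`. Substituting `η ↦ η/a` in `I_{n+1}` leaves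
`M(η/a) Q(η)` times the `1/2`-periodic product `∏_{j=1}^{n} Q(a^j η)` on `[-a/4, a/4]`;
cutting this interval into `2N` periods and applying the refinement identity gives
`a I_{n+1} = I_n`. Hence `R_J = R_1 = a ∫_{-1/4}^{1/4} M = 1/2`, the last step being the first
filter identity integrated over `[-1/4, -1/4 + 1/(4N)]`. Since `Q ≤ 2M`, the `J`-th partial
product of `|ϕ̂|²` has integral at most `2 R_J = 1` over `|ξ| ≤ a^J/4`, and Fatou's lemma
concludes.
-/

open MeasureTheory Complex Real ComplexConjugate Filter

noncomputable section

open Finset Function Topology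
open scoped ENNReal

section Lebesgue

variable {E : Type*} [NormedAddCommGroup E]

theorem MeasureTheory.MemLp.comp_mul_left {f : ℝ → E} {p : ℝ≥0∞} (hf : MemLp f p) {c : ℝ}
    (hc : c ≠ 0) : MemLp (fun x => f (c * x)) p := by
  have hmap := hf.smul_measure (c := ENNReal.ofReal |c⁻¹|) ENNReal.ofReal_ne_top
  rw [← Real.map_volume_mul_left hc] at hmap
  exact hmap.comp_of_map (measurable_const_mul c).aemeasurable

theorem MeasureTheory.LocallyIntegrable.intervalIntegrable {f : ℝ → E}
    (hf : LocallyIntegrable f) (a b : ℝ) : IntervalIntegrable f volume a b :=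
  (hf.integrableOn_isCompact isCompact_uIcc).intervalIntegrable

theorem ae_comp_div {P : ℝ → Prop} (h : ∀ᵐ x, P x) {c : ℝ} (hc : c ≠ 0) : ∀ᵐ x, P (x / c) := by
  simpa only [smul_eq_mul, inv_mul_eq_div] using
    (Measure.quasiMeasurePreserving_smul volume (inv_ne_zero hc)).ae h

variable [NormedSpace ℝ E]

theorem intervalIntegral.integral_eq_integral_sum_shifts {f : ℝ → E} (hf : LocallyIntegrable f)
    (b c : ℝ) (n : ℕ) :
    ∫ x in b..b + n * c, f x = ∫ x in b..b + c, ∑ p ∈ range n, f (x + p * c) := by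
  have hshift : ∀ d u v : ℝ, IntervalIntegrable (fun x => f (x + d)) volume u v := fun d u v => by
    simpa using (hf.intervalIntegrable (u + d) (v + d)).comp_add_right d
  rw [intervalIntegral.integral_finsetSum fun p _ => hshift _ _ _]
  have hpieces := intervalIntegral.sum_integral_adjacent_intervals (a := fun p : ℕ => b + p * c)
    (n := n) fun _ _ => hf.intervalIntegrable _ _
  simp only [Nat.cast_zero, zero_mul, add_zero] at hpieces
  rw [← hpieces]
  refine sum_congr rfl fun p _ => ?_
  rw [intervalIntegral.integral_comp_add_right]
  congr 1
  push_cast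
  ring

theorem intervalIntegral.integral_eq_of_sum_shifts_eq_one {f : ℝ → ℝ} (hf : LocallyIntegrable f)
    (b c : ℝ) (n : ℕ) (hsum : ∀ᵐ x, ∑ p ∈ range n, f (x + p * c) = 1) :
    ∫ x in b..b + n * c, f x = c := by
  rw [integral_eq_integral_sum_shifts hf, intervalIntegral.integral_congr_ae
    (hsum.mono fun x hx _ => hx)]
  simp

theorem integrable_and_integral_le_of_tendsto {g : ℕ → ℝ → ℝ} {f : ℝ → ℝ} {S : ℕ → Set ℝ}
    {C : ℝ} (hC : 0 ≤ C) (hS : ∀ n, MeasurableSet (S n)) (hcover : ∀ x, ∀ᶠ n in atTop, x ∈ S n)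
    (hg : ∀ n, AEStronglyMeasurable (g n)) (hgf : ∀ᵐ x, Tendsto (g · x) atTop (𝓝 (f x)))
    (hbound : ∀ n, ∫⁻ x in S n, ‖g n x‖ₑ ≤ ENNReal.ofReal C) :
    Integrable f ∧ ∫ x, f x ≤ C := by
  set G : ℕ → ℝ → ℝ := fun n => (S n).indicator (g n)
  have hG : ∀ n, AEStronglyMeasurable (G n) := fun n => (hg n).indicator (hS n)
  have hGf : ∀ᵐ x, Tendsto (G · x) atTop (𝓝 (f x)) := by
    filter_upwards [hgf] with x hx
    exact hx.congr' ((hcover x).mono fun n hn => (Set.indicator_of_mem hn _).symm)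
  have hliminf : liminf (fun n => ∫⁻ x, ‖G n x‖ₑ) atTop ≤ ENNReal.ofReal C := by
    refine liminf_le_of_frequently_le' (Frequently.of_forall fun n => ?_)
    simpa only [G, enorm_indicator_eq_indicator_enorm, lintegral_indicator (hS n)] using hbound n
  have hf : ∫⁻ x, ‖f x‖ₑ ≤ ENNReal.ofReal C :=
    (lintegral_enorm_le_liminf_of_tendsto hGf fun n => (hG n).aemeasurable.enorm).trans hliminf
  refine ⟨integrable_of_tendsto hGf hG (ne_top_of_le_ne_top ENNReal.ofReal_ne_top hliminf), ?_⟩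
  calc ∫ x, f x ≤ ‖∫ x, f x‖ := le_norm_self _
    _ ≤ (∫⁻ x, ‖f x‖ₑ).toReal := by
        simpa only [ofReal_norm] using norm_integral_le_lintegral_norm f
    _ ≤ C := ENNReal.toReal_le_of_le_ofReal hC hf

end Lebesgue

theorem norm_add_mul_sq {u v z : ℂ} (hz : ‖z‖ = 1) :
    ‖u + z * v‖ ^ 2 = ‖u‖ ^ 2 + ‖v‖ ^ 2 + 2 * (z * (v * conj u)).re := by
  have hre : (u * conj (z * v)).re = (z * (v * conj u)).re := by
    rw [← Complex.conj_re]
    simp only [map_mul, Complex.conj_conj]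
    ring_nf
  rw [Complex.sq_norm, Complex.normSq_add, Complex.normSq_mul, ← Complex.sq_norm,
    ← Complex.sq_norm, ← Complex.sq_norm, hz, hre]
  ring

theorem norm_add_mul_sq_le {u v z : ℂ} (hz : ‖z‖ = 1) :
    ‖u + z * v‖ ^ 2 ≤ 2 * (‖u‖ ^ 2 + ‖v‖ ^ 2) :=
  calc ‖u + z * v‖ ^ 2 ≤ (‖u‖ + ‖v‖) ^ 2 := by
        gcongr
        exact (norm_add_le _ _).trans_eq (by rw [norm_mul, hz, one_mul])
    _ ≤ 2 * (‖u‖ ^ 2 + ‖v‖ ^ 2) := add_sq_le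

def cascade (a : ℝ) (Q : ℝ → ℝ) (n : ℕ) (η : ℝ) : ℝ := ∏ j ∈ range n, Q (a ^ (j + 1) * η)

section Cascade

variable {a : ℝ} {Q : ℝ → ℝ}

@[simp] theorem cascade_zero : cascade a Q 0 = 1 := by
  funext η
  simp [cascade]

theorem cascade_succ (n : ℕ) (η : ℝ) :
    cascade a Q (n + 1) η = Q (a * η) * cascade a Q n (a * η) := by
  rw [cascade, cascade, prod_range_succ', mul_comm, zero_add, pow_one]
  congr 1
  exact prod_congr rfl fun j _ => by rw [pow_succ, mul_assoc]

theorem cascade_div_pow (ha : a ≠ 0) (n : ℕ) (ξ : ℝ) :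
    cascade a Q n (ξ / a ^ (n + 1)) = ∏ j ∈ range n, Q (ξ / a ^ (j + 1)) := by
  induction n with
  | zero => simp
  | succ n ih =>
    have hξ : a * (ξ / a ^ (n + 1 + 1)) = ξ / a ^ (n + 1) := by
      rw [pow_succ' a (n + 1)]
      field_simp
    rw [cascade_succ, prod_range_succ, ← ih, hξ, mul_comm]

theorem Function.Periodic.cascade {k : ℕ} {c : ℝ} (hQ : Periodic Q (k * c)) (n : ℕ) :
    Periodic (cascade k Q n) c := fun x =>
  prod_congr rfl fun j _ => by
    rw [show (k : ℝ) ^ (j + 1) * (x + c) = k ^ (j + 1) * x + (k ^ j : ℕ) * (k * c) by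
      push_cast; ring]
    exact hQ.nat_mul _ _

theorem MeasureTheory.MemLp.cascade (hQ : MemLp Q ⊤) (ha : a ≠ 0) (n : ℕ) :
    MemLp (_root_.cascade a Q n) ⊤ := by
  induction n with
  | zero => exact cascade_zero (a := a) (Q := Q) ▸ memLp_top_const 1
  | succ n ih =>
    rw [show _root_.cascade a Q (n + 1) =
        (fun η => Q (a * η)) * fun η => _root_.cascade a Q n (a * η) from funext (cascade_succ n)]
    exact (ih.comp_mul_left ha).mul (hQ.comp_mul_left ha)

end Cascade

/-- The properties of `Q = |m₀|²` and `M = 𝕄₀` on which the computation of `R_J` rests. -/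
structure IsRefinementPair (N : ℕ) (Q M : ℝ → ℝ) : Prop where
  memLp_mask : MemLp Q ⊤
  memLp_weight : MemLp M ⊤
  periodic_mask : Periodic Q N
  periodic_weight : Periodic M (1 / 2)
  sum_shifts : ∀ᵐ x, ∑ p ∈ range (2 * N), M (x + p / (4 * N)) = 1
  refinement :
    ∀ᵐ x, ∑ p ∈ range (2 * N), M ((x + p * (1 / 2)) / (2 * N)) * Q (x + p * (1 / 2)) = M x

namespace IsRefinementPair

variable {N : ℕ} {Q M : ℝ → ℝ}

theorem integral_mul_cascade_succ (h : IsRefinementPair N Q M) (hN : N ≠ 0) (n : ℕ) :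
    2 * N * ∫ η in -(1 / 4 : ℝ)..1 / 4, M η * cascade (2 * N) Q (n + 1) η =
      ∫ η in -(1 / 4 : ℝ)..1 / 4, M η * cascade (2 * N) Q n η := by
  set a : ℝ := 2 * N
  have ha : a ≠ 0 := by positivity
  set T := cascade a Q n
  have hT : Periodic T (1 / 2) := by
    have hQ : Periodic Q ((2 * N : ℕ) * (1 / 2)) := by
      convert h.periodic_mask using 1
      push_cast
      ring
    simpa using hQ.cascade n
  set f : ℝ → ℝ := fun x => M (x / a) * Q x * T x
  have hf : LocallyIntegrable f := by
    have hM : MemLp (fun x => M (x / a)) ⊤ := by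
      simpa only [inv_mul_eq_div] using h.memLp_weight.comp_mul_left (inv_ne_zero ha)
    have hmem : MemLp f ⊤ := (h.memLp_mask.cascade ha n).mul (h.memLp_mask.mul (r := ⊤) hM)
    exact hmem.locallyIntegrable le_top
  calc a * ∫ η in -(1 / 4 : ℝ)..1 / 4, M η * cascade a Q (n + 1) η
      = a * ∫ η in -(1 / 4 : ℝ)..1 / 4, f (a * η) := by
        congr 1
        refine intervalIntegral.integral_congr fun η _ => ?_
        simp only [f, cascade_succ, mul_div_cancel_left₀ η ha, T, mul_assoc]
    _ = ∫ x in -(a / 4)..-(a / 4) + (2 * N : ℕ) * (1 / 2), f x := by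
        rw [intervalIntegral.integral_comp_mul_left _ ha, smul_eq_mul, mul_inv_cancel_left₀ ha]
        congr 1 <;> push_cast <;> ring
    _ = ∫ x in -(a / 4)..-(a / 4) + 1 / 2, M x * T x := by
        rw [intervalIntegral.integral_eq_integral_sum_shifts hf]
        refine intervalIntegral.integral_congr_ae (h.refinement.mono fun x hx _ => ?_)
        simp only [f, hT.nat_mul _ x, ← sum_mul]
        exact congrArg (· * T x) hx
    _ = ∫ η in -(1 / 4 : ℝ)..1 / 4, M η * T η := by
        have hMT := (h.periodic_weight.mul hT).intervalIntegral_add_eq (-(a / 4)) (-(1 / 4))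
        simp only [Pi.mul_apply] at hMT
        rw [hMT]
        norm_num

theorem integral_weight (h : IsRefinementPair N Q M) (hN : N ≠ 0) :
    ∫ η in -(1 / 4 : ℝ)..1 / 4, M η = 1 / (4 * N) := by
  have hsum : ∀ᵐ x, ∑ p ∈ range (2 * N), M (x + p * (1 / (4 * N))) = 1 := by
    simpa only [mul_one_div] using h.sum_shifts
  have hint := intervalIntegral.integral_eq_of_sum_shifts_eq_one
    (h.memLp_weight.locallyIntegrable le_top) (-(1 / 4)) _ _ hsum
  rwa [show -(1 / 4 : ℝ) + (2 * N : ℕ) * (1 / (4 * N)) = 1 / 4 by field_simp; push_cast; ring]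
    at hint

theorem integral_mul_cascade (h : IsRefinementPair N Q M) (hN : N ≠ 0) (n : ℕ) :
    ∫ η in -(1 / 4 : ℝ)..1 / 4, M η * cascade (2 * N) Q n η = 1 / (4 * N * (2 * N) ^ n) := by
  induction n with
  | zero => simpa using h.integral_weight hN
  | succ n ih =>
    have hstep := h.integral_mul_cascade_succ hN n
    rw [ih] at hstep
    field_simp at hstep ⊢
    linear_combination hstep

/-- `R_{n+1} = 1/2`. -/
theorem integral_dilation_mul_prod (h : IsRefinementPair N Q M) (hN : N ≠ 0) (n : ℕ) :
    ∫ ξ in -((2 * N : ℝ) ^ (n + 1) / 4)..(2 * N : ℝ) ^ (n + 1) / 4,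
      M (ξ / (2 * N) ^ (n + 1)) * ∏ j ∈ range n, Q (ξ / (2 * N) ^ (j + 1)) = 1 / 2 := by
  have ha : (2 * N : ℝ) ≠ 0 := by positivity
  have hb : (2 * N : ℝ) ^ (n + 1) ≠ 0 := pow_ne_zero _ ha
  simp_rw [← cascade_div_pow ha]
  rw [intervalIntegral.integral_comp_div (fun η => M η * cascade (2 * N) Q n η) hb, neg_div,
    show (2 * N : ℝ) ^ (n + 1) / 4 / (2 * N) ^ (n + 1) = 1 / 4 by field_simp,
    h.integral_mul_cascade hN, smul_eq_mul]
  field_simp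
  ring

theorem lintegral_prod_le (h : IsRefinementPair N Q M) (hN : N ≠ 0) (hQ : ∀ x, 0 ≤ Q x)
    (hQM : ∀ x, Q x ≤ 2 * M x) (n : ℕ) :
    ∫⁻ ξ in Set.Ioc (-((2 * N : ℝ) ^ (n + 1) / 4)) ((2 * N : ℝ) ^ (n + 1) / 4),
      ‖∏ j ∈ range (n + 1), Q (ξ / (2 * N) ^ (j + 1))‖ₑ ≤ ENNReal.ofReal 1 := by
  set b : ℝ := (2 * N : ℝ) ^ (n + 1)
  have ha : (2 * N : ℝ) ≠ 0 := by positivity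
  have hb : b ≠ 0 := pow_ne_zero _ ha
  set g : ℝ → ℝ := fun ξ => M (ξ / b) * ∏ j ∈ range n, Q (ξ / (2 * N) ^ (j + 1))
  have hg : IntervalIntegrable g volume (-(b / 4)) (b / 4) := by
    have hmem : MemLp (fun ξ => M (ξ / b) * cascade (2 * N) Q n (ξ / b)) ⊤ := by
      simpa only [inv_mul_eq_div, Pi.mul_apply] using
        ((h.memLp_mask.cascade ha n).mul (r := ⊤) h.memLp_weight).comp_mul_left (inv_ne_zero hb)
    simp only [g, b, ← cascade_div_pow ha]
    exact (hmem.locallyIntegrable le_top).intervalIntegrable _ _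
  have hprod : ∀ ξ, 0 ≤ ∏ j ∈ range n, Q (ξ / (2 * N) ^ (j + 1)) := fun ξ =>
    prod_nonneg fun j _ => hQ _
  have hM : ∀ x, 0 ≤ M x := fun x => by linarith [hQ x, hQM x]
  have hle : -(b / 4) ≤ b / 4 := by
    have : 0 < b := by positivity
    linarith
  calc ∫⁻ ξ in Set.Ioc (-(b / 4)) (b / 4), ‖∏ j ∈ range (n + 1), Q (ξ / (2 * N) ^ (j + 1))‖ₑ
      ≤ ∫⁻ ξ in Set.Ioc (-(b / 4)) (b / 4), ENNReal.ofReal (2 * g ξ) := by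
        refine lintegral_mono fun ξ => ?_
        rw [prod_range_succ, Real.enorm_eq_ofReal (mul_nonneg (hprod ξ) (hQ _))]
        refine ENNReal.ofReal_le_ofReal ?_
        calc _ ≤ (∏ j ∈ range n, Q (ξ / (2 * N) ^ (j + 1))) * (2 * M (ξ / b)) :=
              mul_le_mul_of_nonneg_left (hQM _) (hprod ξ)
          _ = 2 * g ξ := by ring
    _ = ENNReal.ofReal (∫ ξ in -(b / 4)..b / 4, 2 * g ξ) := by
        rw [intervalIntegral.integral_of_le hle, ofReal_integral_eq_lintegral_ofReal]
        · exact (hg.const_mul 2).1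
        · exact ae_of_all _ fun ξ => mul_nonneg zero_le_two (mul_nonneg (hM _) (hprod ξ))
    _ = ENNReal.ofReal 1 := by
        rw [intervalIntegral.integral_const_mul, h.integral_dilation_mul_prod hN]
        norm_num

theorem integrable_and_integral_le (h : IsRefinementPair N Q M) (hN : N ≠ 0)
    (hQ : ∀ x, 0 ≤ Q x) (hQM : ∀ x, Q x ≤ 2 * M x) {f : ℝ → ℝ}
    (hlim : ∀ᵐ ξ, Tendsto (fun n => ∏ j ∈ range (n + 1), Q (ξ / (2 * N) ^ (j + 1))) atTop
      (𝓝 (f ξ))) :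
    Integrable f ∧ ∫ ξ, f ξ ≤ 1 := by
  have ha : (2 * N : ℝ) ≠ 0 := by positivity
  have hcover : ∀ ξ, ∀ᶠ n in atTop,
      ξ ∈ Set.Ioc (-((2 * N : ℝ) ^ (n + 1) / 4)) ((2 * N : ℝ) ^ (n + 1) / 4) := by
    have h1 : (1 : ℝ) < 2 * N := by
      have : (1 : ℝ) ≤ N := Nat.one_le_cast.2 (Nat.one_le_iff_ne_zero.2 hN)
      linarith
    have hto : Tendsto (fun n : ℕ => (2 * N : ℝ) ^ (n + 1) / 4) atTop atTop :=
      ((tendsto_pow_atTop_atTop_of_one_lt h1).comp (tendsto_add_atTop_nat 1)).atTop_div_const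
        (by norm_num)
    intro ξ
    filter_upwards [hto.eventually_gt_atTop |ξ|] with n hn
    exact ⟨by linarith [neg_abs_le ξ], by linarith [le_abs_self ξ]⟩
  have hmeas : ∀ n, AEStronglyMeasurable fun ξ => ∏ j ∈ range (n + 1), Q (ξ / (2 * N) ^ (j + 1)) :=
    fun n => Finset.aestronglyMeasurable_fun_prod _ fun j _ => by
      simpa only [inv_mul_eq_div] using
        (h.memLp_mask.comp_mul_left (inv_ne_zero (pow_ne_zero (j + 1) ha))).1
  exact integrable_and_integral_le_of_tendsto zero_le_one (fun _ => measurableSet_Ioc) hcover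
    hmeas hlim (h.lintegral_prod_le hN hQ hQM)

end IsRefinementPair

def lowpass (N : ℕ) (r : ℤ) (m₁ m₂ : ℝ → ℂ) (ξ : ℝ) : ℂ :=
  m₁ ξ + Complex.exp (-2 * π * I * ξ * r / N) * m₂ ξ

section Lowpass

variable {N : ℕ} {r : ℤ} {m₁ m₂ : ℝ → ℂ}

theorem norm_exp_neg_two_pi_I_mul (N : ℕ) (r : ℤ) (ξ : ℝ) :
    ‖Complex.exp (-2 * π * I * ξ * r / N)‖ = 1 := by
  rw [Complex.norm_exp]
  simp

theorem norm_exp_neg_pi_I_mul (N : ℕ) (r : ℤ) (p : ℕ) :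
    ‖Complex.exp (-π * I * r * p / N)‖ = 1 := by
  rw [Complex.norm_exp]
  simp

theorem norm_sq_lowpass_le (ξ : ℝ) :
    ‖lowpass N r m₁ m₂ ξ‖ ^ 2 ≤ 2 * (‖m₁ ξ‖ ^ 2 + ‖m₂ ξ‖ ^ 2) :=
  norm_add_mul_sq_le (norm_exp_neg_two_pi_I_mul N r ξ)

theorem lowpass_add_half_mul (hm₁ : Periodic m₁ (1 / 2)) (hm₂ : Periodic m₂ (1 / 2)) (ξ : ℝ)
    (p : ℕ) :
    lowpass N r m₁ m₂ (ξ + p * (1 / 2)) =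
      m₁ ξ + Complex.exp (-π * I * r * p / N) * (Complex.exp (-2 * π * I * ξ * r / N) * m₂ ξ) := by
  rw [lowpass, hm₁.nat_mul p ξ, hm₂.nat_mul p ξ, ← mul_assoc, ← Complex.exp_add]
  congr 3
  push_cast
  ring

theorem periodic_lowpass (hN : N ≠ 0) (hm₁ : Periodic m₁ (1 / 2)) (hm₂ : Periodic m₂ (1 / 2)) :
    Periodic (lowpass N r m₁ m₂) N := fun ξ => by
  have hshift := lowpass_add_half_mul (N := N) (r := r) hm₁ hm₂ ξ (2 * N)
  have hphase : Complex.exp (-π * I * r * (2 * N : ℕ) / N) = 1 := by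
    rw [show -π * I * r * (2 * N : ℕ) / N = (-r : ℤ) * (2 * π * I) by push_cast; field_simp]
    exact Complex.exp_int_mul_two_pi_mul_I _
  rw [show ((2 * N : ℕ) : ℝ) * (1 / 2) = N by push_cast; ring, hphase, one_mul] at hshift
  exact hshift

theorem norm_sq_lowpass_add_half_mul (hm₁ : Periodic m₁ (1 / 2)) (hm₂ : Periodic m₂ (1 / 2))
    (ξ : ℝ) (p : ℕ) :
    ‖lowpass N r m₁ m₂ (ξ + p * (1 / 2))‖ ^ 2 = ‖m₁ ξ‖ ^ 2 + ‖m₂ ξ‖ ^ 2 +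
      2 * (Complex.exp (-π * I * r * p / N) *
        (Complex.exp (-2 * π * I * ξ * r / N) * m₂ ξ * conj (m₁ ξ))).re := by
  rw [lowpass_add_half_mul hm₁ hm₂, norm_add_mul_sq (norm_exp_neg_pi_I_mul N r p), norm_mul,
    norm_exp_neg_two_pi_I_mul, one_mul]

theorem sum_norm_sq_lowpass_mul (hN : N ≠ 0) (hm₁ : Periodic m₁ (1 / 2))
    (hm₂ : Periodic m₂ (1 / 2)) {M : ℝ → ℝ} (hM : ∀ ξ, M ξ = ‖m₁ ξ‖ ^ 2 + ‖m₂ ξ‖ ^ 2) (ξ : ℝ)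
    (h₁ : ∑ p ∈ range (2 * N), M (ξ / (2 * N) + p / (4 * N)) = 1)
    (h₂ : ∑ p ∈ range (2 * N),
      Complex.exp (-π * I * r * p / N) * (M (ξ / (2 * N) + p / (4 * N)) : ℂ) = 0) :
    ∑ p ∈ range (2 * N),
      M ((ξ + p * (1 / 2)) / (2 * N)) * ‖lowpass N r m₁ m₂ (ξ + p * (1 / 2))‖ ^ 2 = M ξ := by
  set w := Complex.exp (-2 * π * I * ξ * r / N) * m₂ ξ * conj (m₁ ξ)
  set c : ℕ → ℝ := fun p => M (ξ / (2 * N) + p / (4 * N))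
  have harg : ∀ p : ℕ, (ξ + p * (1 / 2)) / (2 * N) = ξ / (2 * N) + p / (4 * N) := fun p => by
    field_simp
    ring
  calc ∑ p ∈ range (2 * N),
        M ((ξ + p * (1 / 2)) / (2 * N)) * ‖lowpass N r m₁ m₂ (ξ + p * (1 / 2))‖ ^ 2
      = ∑ p ∈ range (2 * N), (M ξ * c p +
          2 * (Complex.exp (-π * I * r * p / N) * (c p : ℂ) * w).re) := by
        refine sum_congr rfl fun p _ => ?_
        rw [harg, norm_sq_lowpass_add_half_mul hm₁ hm₂, ← hM, mul_right_comm _ (c p : ℂ),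
          Complex.re_mul_ofReal]
        ring
    _ = M ξ * ∑ p ∈ range (2 * N), c p +
          2 * ((∑ p ∈ range (2 * N), Complex.exp (-π * I * r * p / N) * (c p : ℂ)) * w).re := by
        rw [sum_add_distrib, ← mul_sum, ← mul_sum, ← Complex.re_sum, ← sum_mul]
    _ = M ξ := by
        rw [h₁, h₂]
        simp

theorem isRefinementPair_lowpass (hN : N ≠ 0) (hm₁ : Periodic m₁ (1 / 2))
    (hm₂ : Periodic m₂ (1 / 2)) (hsm₁ : AEStronglyMeasurable m₁) (hsm₂ : AEStronglyMeasurable m₂)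
    {M : ℝ → ℝ} (hM : ∀ ξ, M ξ = ‖m₁ ξ‖ ^ 2 + ‖m₂ ξ‖ ^ 2)
    (hid₁ : ∀ᵐ ξ, ∑ p ∈ range (2 * N), M (ξ + p / (4 * N)) = 1)
    (hid₂ : ∀ᵐ ξ, ∑ p ∈ range (2 * N),
      Complex.exp (-π * I * r * p / N) * (M (ξ + p / (4 * N)) : ℂ) = 0) :
    IsRefinementPair N (fun ξ => ‖lowpass N r m₁ m₂ ξ‖ ^ 2) M := by
  have hM_nonneg : ∀ ξ, 0 ≤ M ξ := fun ξ => by rw [hM]; positivity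
  have hM_le_one : ∀ᵐ ξ, M ξ ≤ 1 := hid₁.mono fun ξ hξ => by
    simpa [hξ] using Finset.single_le_sum (fun (p : ℕ) _ => hM_nonneg (ξ + p / (4 * N)))
      (mem_range.2 (Nat.pos_of_ne_zero (mul_ne_zero two_ne_zero hN)))
  have hsmM : AEStronglyMeasurable M :=
    ((hsm₁.norm.pow 2).add (hsm₂.norm.pow 2)).congr (.of_forall fun ξ => (hM ξ).symm)
  have hsm : AEStronglyMeasurable (lowpass N r m₁ m₂) :=
    hsm₁.add ((by fun_prop : Continuous fun ξ : ℝ =>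
      Complex.exp (-2 * π * I * ξ * r / N)).aestronglyMeasurable.mul hsm₂)
  refine ⟨memLp_top_of_bound (hsm.norm.pow 2) 2 (hM_le_one.mono fun ξ hξ => ?_),
    memLp_top_of_bound hsmM 1 (hM_le_one.mono fun ξ hξ => ?_),
    (periodic_lowpass hN hm₁ hm₂).comp fun z => ‖z‖ ^ 2,
    fun ξ => by simp only [hM, hm₁ ξ, hm₂ ξ], hid₁, ?_⟩
  · have hQM : ‖lowpass N r m₁ m₂ ξ‖ ^ 2 ≤ 2 * M ξ := hM ξ ▸ norm_sq_lowpass_le ξ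
    rw [Real.norm_of_nonneg (by positivity)]
    linarith
  · rw [Real.norm_of_nonneg (hM_nonneg ξ)]
    exact hξ
  · have ha : (2 * N : ℝ) ≠ 0 := by positivity
    filter_upwards [ae_comp_div hid₁ ha, ae_comp_div hid₂ ha] with ξ h₁ h₂
    exact sum_norm_sq_lowpass_mul hN hm₁ hm₂ hM ξ h₁ h₂

end Lowpass

theorem infinite_product_memL2_general (N : ℕ) (r : ℤ) (hN : 1 ≤ N)
    (m01 m02 : ℝ → ℂ)
    (hper1 : Function.Periodic m01 (1 / 2)) (hper2 : Function.Periodic m02 (1 / 2))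
    (hsm1 : AEStronglyMeasurable m01 (volume : Measure ℝ))
    (hsm2 : AEStronglyMeasurable m02 (volume : Measure ℝ))
    (m0 : ℝ → ℂ)
    (hm0 : ∀ ξ : ℝ, m0 ξ = m01 ξ + Complex.exp (-2 * π * I * ξ * r / N) * m02 ξ)
    (M0 : ℝ → ℝ) (hM0 : ∀ ξ : ℝ, M0 ξ = ‖m01 ξ‖ ^ 2 + ‖m02 ξ‖ ^ 2)
    (hid1 : ∀ᵐ ξ : ℝ, (∑ p ∈ Finset.range (2 * N), M0 (ξ + (p : ℝ) / (4 * N))) = 1)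
    (hid2 : ∀ᵐ ξ : ℝ, (∑ p ∈ Finset.range (2 * N),
        Complex.exp (-π * I * r * p / N) * (M0 (ξ + (p : ℝ) / (4 * N)) : ℂ)) = 0)
    (φhat : ℝ → ℂ) (hφm : AEStronglyMeasurable φhat (volume : Measure ℝ))
    (hprod : ∀ᵐ ξ : ℝ, Tendsto
        (fun n : ℕ => ∏ j ∈ Finset.range n, m0 (ξ / ((2 * N : ℝ)) ^ (j + 1)))
        atTop (nhds (φhat ξ))) :
    MemLp φhat 2 (volume : Measure ℝ) ∧ (∫ ξ : ℝ, ‖φhat ξ‖ ^ 2) ≤ 1 := by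
  obtain rfl : m0 = lowpass N r m01 m02 := funext hm0
  have hN0 : N ≠ 0 := by omega
  have hlim : ∀ᵐ ξ, Tendsto (fun n => ∏ j ∈ range (n + 1),
      ‖lowpass N r m01 m02 (ξ / (2 * N) ^ (j + 1))‖ ^ 2) atTop (𝓝 (‖φhat ξ‖ ^ 2)) := by
    filter_upwards [hprod] with ξ hξ
    simpa only [prod_pow, norm_prod, Function.comp_apply] using
      ((hξ.comp (tendsto_add_atTop_nat 1)).norm.pow 2)
  obtain ⟨hint, hle⟩ := (isRefinementPair_lowpass hN0 hper1 hper2 hsm1 hsm2 hM0 hid1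
    hid2).integrable_and_integral_le hN0 (fun _ => by positivity)
    (fun ξ => hM0 ξ ▸ norm_sq_lowpass_le ξ) hlim
  exact ⟨(memLp_two_iff_integrable_sq_norm hφm).2 hint, hle⟩

/-- If the low-pass filter m₀ satisfies the nonuniform filter identities and the
infinite product ∏_{j≥1} m₀(ξ/(2N)^j) converges a.e. to ϕ̂, then ϕ̂ ∈ L²(ℝ) with
‖ϕ̂‖² ≤ 1. -/
theorem infinite_product_memL2 (N : ℕ) (r : ℤ) (hN : 1 ≤ N) (hodd : Odd r)
    (hr1 : 1 ≤ r) (hr2 : r ≤ 2 * (N : ℤ) - 1) (hcop : Int.gcd r (N : ℤ) = 1)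
    (m01 m02 : ℝ → ℂ)
    (hper1 : Function.Periodic m01 (1 / 2)) (hper2 : Function.Periodic m02 (1 / 2))
    (hsm1 : AEStronglyMeasurable m01 (volume : Measure ℝ))
    (hsm2 : AEStronglyMeasurable m02 (volume : Measure ℝ))
    (m0 : ℝ → ℂ)
    (hm0 : ∀ ξ : ℝ, m0 ξ = m01 ξ + Complex.exp (-2 * π * I * ξ * r / N) * m02 ξ)
    (hm00 : m0 0 = 1) (hcont : ContinuousAt m0 0)
    (M0 : ℝ → ℝ) (hM0 : ∀ ξ : ℝ, M0 ξ = ‖m01 ξ‖ ^ 2 + ‖m02 ξ‖ ^ 2)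
    (hid1 : ∀ᵐ ξ : ℝ, (∑ p ∈ Finset.range (2 * N), M0 (ξ + (p : ℝ) / (4 * N))) = 1)
    (hid2 : ∀ᵐ ξ : ℝ, (∑ p ∈ Finset.range (2 * N),
        Complex.exp (-π * I * r * p / N) * (M0 (ξ + (p : ℝ) / (4 * N)) : ℂ)) = 0)
    (φhat : ℝ → ℂ) (hφm : AEStronglyMeasurable φhat (volume : Measure ℝ))
    (hprod : ∀ᵐ ξ : ℝ, Tendsto
        (fun n : ℕ => ∏ j ∈ Finset.range n, m0 (ξ / ((2 * N : ℝ)) ^ (j + 1)))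
        atTop (nhds (φhat ξ))) :
    MemLp φhat 2 (volume : Measure ℝ) ∧ (∫ ξ : ℝ, ‖φhat ξ‖ ^ 2) ≤ 1 :=
  infinite_product_memL2_general N r hN m01 m02 hper1 hper2 hsm1 hsm2 m0 hm0 M0 hM0 hid1 hid2 φhat
    hφm hprod
end
end

section
/- Define ϕ = χ_{A_N} where A_N = ⋃_{j=0}^{N−1} [2j/N, (2j+1)/N). Then the translates {ϕ(t − λ) : λ ∈ Ω}, where Ω = {0, 1/N} + 2ℤ, form an orthonormal system in L²(ℝ). -/
open MeasureTheory Complex Real ComplexConjugate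

noncomputable section

/-- The set A_N = ⋃_{j=0}^{N−1} [2j/N, (2j+1)/N). -/
def haarSet (N : ℕ) : Set ℝ :=
  ⋃ j ∈ Finset.range N, Set.Ico ((2 * j : ℝ) / N) ((2 * j + 1 : ℝ) / N)

/-- The nonuniform Haar scaling function ϕ = χ_{A_N}. -/
def haarScaling (N : ℕ) : ℝ → ℂ := Set.indicator (haarSet N) (fun _ => (1 : ℂ))

/-! Scaling by `N`, `x ∈ A_N` iff `⌊N x⌋` is one of the even integers `0, 2, …, 2N - 2`, and
`Ω = K / N` with `K = {0, 1} + 2Nℤ`. Translation by `k / N` shifts `⌊N x⌋` by `k`, so if `t - λ` and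
`t - σ` both lie in `A_N`, the numerators of `λ` and `σ` have the same parity and differ by less
than `2N`; inside `K` this forces `λ = σ`. Distinct translates thus have disjoint supports, and
for `λ = σ` the integral is the measure of `A_N`, which is `N · (1 / N) = 1`. -/

lemma floor_mul_eq_iff_mem_Ico {c : ℝ} (hc : 0 < c) (x : ℝ) (k : ℤ) :
    ⌊c * x⌋ = k ↔ x ∈ Set.Ico (k / c) ((k + 1) / c) := by
  rw [Int.floor_eq_iff, Set.mem_Ico, div_le_iff₀ hc, lt_div_iff₀ hc, mul_comm x]

lemma mem_haarSet_iff {N : ℕ} (hN : 0 < N) (x : ℝ) :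
    x ∈ haarSet N ↔ ∃ j < N, ⌊(N : ℝ) * x⌋ = 2 * j := by
  simp only [haarSet, Set.mem_iUnion, Finset.mem_range, exists_prop,
    floor_mul_eq_iff_mem_Ico (Nat.cast_pos.2 hN)]
  push_cast
  rfl

lemma volume_haarSet {N : ℕ} (hN : 0 < N) : volume (haarSet N) = 1 := by
  have hN' : (0 : ℝ) < N := Nat.cast_pos.2 hN
  rw [haarSet, measure_biUnion_finset]
  · have hlen : ∀ j : ℕ, (2 * j + 1 : ℝ) / N - 2 * j / N = 1 / N := fun j => by ring
    simp only [Real.volume_Ico, hlen, Finset.sum_const, Finset.card_range, nsmul_eq_mul]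
    rw [← ENNReal.ofReal_natCast, ← ENNReal.ofReal_mul hN'.le, mul_one_div_cancel hN'.ne',
      ENNReal.ofReal_one]
  · intro i _ j _ hij
    refine Set.disjoint_left.2 fun x hi hj => hij ?_
    have hfi := (floor_mul_eq_iff_mem_Ico hN' x (2 * i)).2 (by push_cast; exact hi)
    have hfj := (floor_mul_eq_iff_mem_Ico hN' x (2 * j)).2 (by push_cast; exact hj)
    omega
  · exact fun _ _ => measurableSet_Ico

def omegaNumerators (N : ℕ) : Set ℤ := {k | ∃ m : ℤ, k = 2 * N * m ∨ k = 1 + 2 * N * m}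

lemma exists_mem_omegaNumerators_of_mem_Omega {N : ℕ} (hN : 0 < N) {x : ℝ}
    (hx : x ∈ Omega N 1) : ∃ k ∈ omegaNumerators N, x = k / N := by
  have hN' : (N : ℝ) ≠ 0 := Nat.cast_ne_zero.2 hN.ne'
  obtain ⟨m, rfl | rfl⟩ := hx
  · exact ⟨2 * N * m, ⟨m, .inl rfl⟩, by push_cast; field_simp⟩
  · exact ⟨1 + 2 * N * m, ⟨m, .inr rfl⟩, by push_cast; field_simp⟩

lemma eq_of_sub_eq_two_mul_of_mem_omegaNumerators {N : ℕ} {f k l : ℤ}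
    (hk : k ∈ omegaNumerators N) (hl : l ∈ omegaNumerators N) {i j : ℕ} (hi : i < N) (hj : j < N)
    (hfk : f - k = 2 * i) (hfl : f - l = 2 * j) : k = l := by
  obtain ⟨m, hm⟩ := hk
  obtain ⟨n, hn⟩ := hl
  -- `k - l = 2 (j - i)` is even, so `k` and `l` have the same offset in `{0, 1}`.
  have hkl : k - l = 2 * (N * m - N * n) := by
    rw [mul_assoc] at hm hn
    generalize (N : ℤ) * m = a at hm ⊢
    generalize (N : ℤ) * n = b at hn ⊢
    omega
  have hdvd : 2 * (N : ℤ) ∣ k - l := ⟨m - n, by rw [hkl]; ring⟩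
  exact sub_eq_zero.1 (Int.eq_zero_of_abs_lt_dvd hdvd (abs_lt.2 ⟨by omega, by omega⟩))

lemma eq_of_sub_mem_haarSet {N : ℕ} (hN : 0 < N) {lam sig t : ℝ} (hlam : lam ∈ Omega N 1)
    (hsig : sig ∈ Omega N 1) (hlam' : t - lam ∈ haarSet N) (hsig' : t - sig ∈ haarSet N) :
    lam = sig := by
  have hN' : (N : ℝ) ≠ 0 := Nat.cast_ne_zero.2 hN.ne'
  have floor_sub (k : ℤ) : ⌊(N : ℝ) * (t - k / N)⌋ = ⌊(N : ℝ) * t⌋ - k := by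
    rw [mul_sub, mul_div_cancel₀ _ hN', Int.floor_sub_intCast]
  obtain ⟨k, hk, rfl⟩ := exists_mem_omegaNumerators_of_mem_Omega hN hlam
  obtain ⟨l, hl, rfl⟩ := exists_mem_omegaNumerators_of_mem_Omega hN hsig
  rw [mem_haarSet_iff hN, floor_sub] at hlam' hsig'
  obtain ⟨i, hi, hfk⟩ := hlam'
  obtain ⟨j, hj, hfl⟩ := hsig'
  rw [eq_of_sub_eq_two_mul_of_mem_omegaNumerators hk hl hi hj hfk hfl]

lemma integral_indicator_sub_mul_conj_indicator_sub {A : Set ℝ} (hA : MeasurableSet A)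
    {lam sig : ℝ} (hsep : ∀ t, t - lam ∈ A → t - sig ∈ A → lam = sig) :
    ∫ t, A.indicator (fun _ => (1 : ℂ)) (t - lam) * conj (A.indicator (fun _ => (1 : ℂ)) (t - sig))
      = if lam = sig then (volume.real A : ℂ) else 0 := by
  set S := (· - lam) ⁻¹' A ∩ (· - sig) ⁻¹' A
  have hS : MeasurableSet S :=
    (hA.preimage (measurable_sub_const lam)).inter (hA.preimage (measurable_sub_const sig))
  have hprod (t : ℝ) : A.indicator (fun _ => (1 : ℂ)) (t - lam) *
      conj (A.indicator (fun _ => (1 : ℂ)) (t - sig)) = S.indicator (fun _ => 1) t := by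
    by_cases h1 : t - lam ∈ A <;> by_cases h2 : t - sig ∈ A <;> simp [S, h1, h2]
  simp only [hprod, integral_indicator_const _ hS]
  split_ifs with h
  · subst h
    simp only [S, Set.inter_self]
    rw [measureReal_def, (measurePreserving_sub_right volume lam).measure_preimage
      hA.nullMeasurableSet, measureReal_def]
    simp
  · rw [show S = ∅ from Set.eq_empty_iff_forall_notMem.2 fun t ht => h (hsep t ht.1 ht.2)]
    simp

/-- The Ω-translates of χ_{A_N}, with Ω = {0, 1/N} + 2ℤ, are orthonormal. -/
theorem haarScaling_orthonormal (N : ℕ) (hN : 1 ≤ N) :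
    ∀ lam ∈ Omega N 1, ∀ sig ∈ Omega N 1,
      ∫ t : ℝ, haarScaling N (t - lam) * conj (haarScaling N (t - sig))
        = if lam = sig then 1 else 0 := by
  intro lam hlam sig hsig
  have hA : MeasurableSet (haarSet N) :=
    (Finset.range N).finite_toSet.measurableSet_biUnion fun _ _ => measurableSet_Ico
  rw [haarScaling, integral_indicator_sub_mul_conj_indicator_sub hA
    fun t => eq_of_sub_mem_haarSet hN hlam hsig, measureReal_def, volume_haarSet hN]
  simp

end
end

section
/- With W_j the orthogonal complement of V_j in V_{j+1} for an LCT-NUMRA, and U_{j,n} the wavelet packet spaces, for every j ≥ 0 and 0 ≤ m ≤ j one has W_j = ⊕_{ℓ=(2N)^m}^{(2N)^{m+1}−1} U_{j−m, ℓ}; in particular W_j = ⊕_{ℓ=(2N)^j}^{(2N)^{j+1}−1} U_{0,ℓ}, and consequently L²(ℝ) = ⊕_{j∈ℤ} W_j admits the wavelet packet decomposition L²(ℝ) = ⊕_{j∈ℤ} ⊕_{ℓ=(2N)^m}^{(2N)^{m+1}−1} U_{j−m,ℓ}. -/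
open MeasureTheory Complex Real

/-! Splitting each packet space `U j n` into `U (j - 1) (2Nn + l)`, `l < 2N`, turns a block
`Ico a b` of packets at level `j` into the block `Ico (2N a) (2N b)` at level `j - 1`; iterating
`m` times from `W_j = ⊕_{1 ≤ l < 2N} U j l` gives the first claim. For the second, a vector
orthogonal to every `W_j = V (j+1) ⊖ V j` has the same projection onto every `V j`; that common
projection lies in `⨅ j, V j = ⊥`, so the vector is orthogonal to the dense `⨆ j, V j`. -/

namespace Submodule

theorem topologicalClosure_biSup_topologicalClosure {R M ι : Type*} [Semiring R]
    [AddCommMonoid M] [TopologicalSpace M] [Module R M] [ContinuousAdd M]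
    [ContinuousConstSMul R M] (p : ι → Prop) (S : ι → Submodule R M) :
    (⨆ (i) (_ : p i), (S i).topologicalClosure).topologicalClosure
      = (⨆ (i) (_ : p i), S i).topologicalClosure :=
  le_antisymm
    (topologicalClosure_minimal _
      (iSup₂_le fun i hi => topologicalClosure_mono (le_iSup₂ (f := fun i _ => S i) i hi))
      (isClosed_topologicalClosure _))
    (topologicalClosure_mono (iSup₂_mono fun _ _ => le_topologicalClosure _))

end Submodule

theorem biSup_Ico_biSup_range_mul_add {α : Type*} [CompleteLattice α] (k a b : ℕ) (f : ℕ → α) :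
    (⨆ n ∈ Finset.Ico a b, ⨆ l ∈ Finset.range k, f (k * n + l))
      = ⨆ ℓ ∈ Finset.Ico (k * a) (k * b), f ℓ := by
  apply le_antisymm
  · refine iSup₂_le fun n hn => iSup₂_le fun l hl => le_iSup₂ (f := fun ℓ _ => f ℓ) _ ?_
    simp only [Finset.mem_Ico, Finset.mem_range] at hn hl ⊢
    constructor <;> nlinarith
  · refine iSup₂_le fun ℓ hℓ => ?_
    simp only [Finset.mem_Ico] at hℓ
    have hk : 0 < k := Nat.pos_of_ne_zero fun hk => by simp [hk] at hℓ
    have hn : ℓ / k ∈ Finset.Ico a b := Finset.mem_Ico.2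
      ⟨(Nat.le_div_iff_mul_le hk).2 (by linarith), Nat.div_lt_of_lt_mul hℓ.2⟩
    have hl : ℓ % k ∈ Finset.range k := Finset.mem_range.2 (Nat.mod_lt _ hk)
    calc f ℓ = f (k * (ℓ / k) + ℓ % k) := by rw [Nat.div_add_mod]
      _ ≤ _ := (le_iSup₂ (f := fun n _ => ⨆ l ∈ Finset.range k, f (k * n + l)) _ hn).trans' <|
          le_iSup₂ (f := fun l _ => f (k * (ℓ / k) + l)) _ hl

section WaveletPacket

variable {R M : Type*} [Semiring R] [AddCommMonoid M] [TopologicalSpace M] [Module R M]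
  [ContinuousAdd M] [ContinuousConstSMul R M] {U : ℤ → ℕ → Submodule R M} {k : ℕ}

theorem topologicalClosure_biSup_Ico_packet_split
    (hsplit : ∀ j n, U j n = (⨆ l ∈ Finset.range k, U (j - 1) (k * n + l)).topologicalClosure)
    (j : ℤ) (a b : ℕ) :
    (⨆ n ∈ Finset.Ico a b, U j n).topologicalClosure
      = (⨆ ℓ ∈ Finset.Ico (k * a) (k * b), U (j - 1) ℓ).topologicalClosure := by
  simp_rw [hsplit j]
  rw [Submodule.topologicalClosure_biSup_topologicalClosure, biSup_Ico_biSup_range_mul_add]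

theorem topologicalClosure_biSup_Ico_packet_split_pow
    (hsplit : ∀ j n, U j n = (⨆ l ∈ Finset.range k, U (j - 1) (k * n + l)).topologicalClosure)
    (j : ℤ) (a b m : ℕ) :
    (⨆ n ∈ Finset.Ico a b, U j n).topologicalClosure
      = (⨆ ℓ ∈ Finset.Ico (k ^ m * a) (k ^ m * b), U (j - m) ℓ).topologicalClosure := by
  induction m with
  | zero => simp
  | succ m ih =>
    rw [ih, topologicalClosure_biSup_Ico_packet_split hsplit, pow_succ', mul_assoc, mul_assoc]
    push_cast
    ring_nf

end WaveletPacket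

section Hilbert

variable {𝕜 E : Type*} [RCLike 𝕜] [NormedAddCommGroup E] [InnerProductSpace 𝕜 E]

namespace Submodule

theorem starProjection_eq_of_mem_orthogonal_orthogonal_inf {K₁ K₂ : Submodule 𝕜 E}
    [K₁.HasOrthogonalProjection] [K₂.HasOrthogonalProjection] (h : K₁ ≤ K₂) {f : E}
    (hf : f ∈ (K₁ᗮ ⊓ K₂)ᗮ) : K₂.starProjection f = K₁.starProjection f := by
  refine eq_starProjection_of_mem_orthogonal (h (K₁.starProjection_apply_mem f)) ?_
  rw [← sup_orthogonal_inf_of_hasOrthogonalProjection h, ← inf_orthogonal]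
  have hproj : K₁.starProjection f ∈ (K₁ᗮ ⊓ K₂)ᗮ :=
    orthogonal_le inf_le_left (K₁.le_orthogonal_orthogonal (K₁.starProjection_apply_mem f))
  exact ⟨sub_starProjection_mem_orthogonal f, sub_mem hf hproj⟩

theorem topologicalClosure_iSup_inf_orthogonal_eq_top [CompleteSpace E] {V : ℤ → Submodule 𝕜 E}
    (hclosed : ∀ j, IsClosed (V j : Set E)) (hmono : ∀ j, V j ≤ V (j + 1))
    (hdense : (⨆ j, V j).topologicalClosure = ⊤) (htriv : ⨅ j, V j = ⊥) :
    (⨆ j, V (j + 1) ⊓ (V j)ᗮ).topologicalClosure = ⊤ := by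
  have := fun j => (hclosed j).completeSpace_coe
  rw [topologicalClosure_eq_top_iff, eq_bot_iff] at hdense ⊢
  intro f hf
  have hstep : ∀ j, (V (j + 1)).starProjection f = (V j).starProjection f := fun j =>
    starProjection_eq_of_mem_orthogonal_orthogonal_inf (hmono j)
      (orthogonal_le (inf_comm (V j)ᗮ _ ▸ le_iSup (fun j => V (j + 1) ⊓ (V j)ᗮ) j) hf)
  have hconst : ∀ j, (V j).starProjection f = (V 0).starProjection f := by
    intro j
    induction j using Int.induction_on with
    | zero => rfl
    | succ n ih => rw [hstep, ih]
    | pred n ih => rw [← ih, ← hstep, sub_add_cancel]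
  have hzero : (V 0).starProjection f = 0 := by
    have hmem : (V 0).starProjection f ∈ ⨅ j, V j :=
      mem_iInf _ |>.2 fun j => hconst j ▸ (V j).starProjection_apply_mem f
    rwa [htriv, mem_bot] at hmem
  refine hdense ?_
  rw [← iInf_orthogonal, mem_iInf]
  intro j
  simpa [hconst j, hzero] using (V j).sub_starProjection_mem_orthogonal f

end Submodule

end Hilbert

theorem waveletPacket_decomposition_general (N : ℕ)
    (V : ℤ → Submodule ℂ (Lp ℂ 2 (volume : Measure ℝ)))
    (U : ℤ → ℕ → Submodule ℂ (Lp ℂ 2 (volume : Measure ℝ)))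
    (hclosedV : ∀ j : ℤ, IsClosed (V j : Set (Lp ℂ 2 (volume : Measure ℝ))))
    (hmono : ∀ j : ℤ, V j ≤ V (j + 1))
    (hdense : (⨆ j : ℤ, V j).topologicalClosure = ⊤)
    (htriv : (⨅ j : ℤ, V j) = ⊥)
    (hW : ∀ j : ℤ, V (j + 1) ⊓ (V j)ᗮ
        = (⨆ l ∈ Finset.Ico 1 (2 * N), U j l).topologicalClosure)
    (hsplit : ∀ (j : ℤ) (n : ℕ), U j n
        = (⨆ l ∈ Finset.range (2 * N), U (j - 1) (2 * N * n + l)).topologicalClosure) :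
    (∀ j : ℤ, 0 ≤ j → ∀ m : ℕ, (m : ℤ) ≤ j →
      V (j + 1) ⊓ (V j)ᗮ
        = (⨆ l ∈ Finset.Ico ((2 * N) ^ m) ((2 * N) ^ (m + 1)),
            U (j - m) l).topologicalClosure) ∧
    (⨆ j : ℤ, V (j + 1) ⊓ (V j)ᗮ).topologicalClosure = ⊤ := by
  refine ⟨fun j _ m _ => ?_,
    Submodule.topologicalClosure_iSup_inf_orthogonal_eq_top hclosedV hmono hdense htriv⟩
  rw [hW j, topologicalClosure_biSup_Ico_packet_split_pow hsplit j 1 (2 * N) m, pow_succ, mul_one]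

/-- Orthogonal decomposition of the wavelet subspaces W_j = V_{j+1} ⊖ V_j of an
LCT-NUMRA into wavelet packet spaces: W_j = ⊕_{ℓ=(2N)^m}^{(2N)^{m+1}−1} U_{j−m,ℓ}
for 0 ≤ m ≤ j, and consequently L²(ℝ) = ⊕_{j∈ℤ} W_j yields the wavelet packet
decomposition of L²(ℝ). -/
theorem waveletPacket_decomposition (N : ℕ) (hN : 1 ≤ N)
    (V : ℤ → Submodule ℂ (Lp ℂ 2 (volume : Measure ℝ)))
    (U : ℤ → ℕ → Submodule ℂ (Lp ℂ 2 (volume : Measure ℝ)))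
    (hclosedV : ∀ j : ℤ, IsClosed (V j : Set (Lp ℂ 2 (volume : Measure ℝ))))
    (hmono : ∀ j : ℤ, V j ≤ V (j + 1))
    (hdense : (⨆ j : ℤ, V j).topologicalClosure = ⊤)
    (htriv : (⨅ j : ℤ, V j) = ⊥)
    (hclosedU : ∀ (j : ℤ) (n : ℕ), IsClosed (U j n : Set (Lp ℂ 2 (volume : Measure ℝ))))
    (hU0 : ∀ j : ℤ, U j 0 = V j)
    (hW : ∀ j : ℤ, V (j + 1) ⊓ (V j)ᗮ
        = (⨆ l ∈ Finset.Ico 1 (2 * N), U j l).topologicalClosure)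
    (hsplit : ∀ (j : ℤ) (n : ℕ), U j n
        = (⨆ l ∈ Finset.range (2 * N), U (j - 1) (2 * N * n + l)).topologicalClosure)
    (horthU : ∀ (j : ℤ) (n₁ n₂ : ℕ), n₁ ≠ n₂ →
        ∀ f ∈ U j n₁, ∀ g ∈ U j n₂, @inner ℂ _ _ f g = (0 : ℂ)) :
    (∀ j : ℤ, 0 ≤ j → ∀ m : ℕ, (m : ℤ) ≤ j →
      V (j + 1) ⊓ (V j)ᗮ
        = (⨆ l ∈ Finset.Ico ((2 * N) ^ m) ((2 * N) ^ (m + 1)),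
            U (j - m) l).topologicalClosure) ∧
    (⨆ j : ℤ, V (j + 1) ⊓ (V j)ᗮ).topologicalClosure = ⊤ :=
  waveletPacket_decomposition_general N V U hclosedV hmono hdense htriv hW hsplit
end
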